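/- Let N : ℝ → ℝ be differentiable, q : ℝ → ℝ differentiable with q'(s) = N(q(s)) for all s, and let (σ, ρ) be an extremal on an open interval I with N(q(σ(t))) ≠ 0 for all t ∈ I, whose first integrals at a base point t₀ ∈ I are C₀ = −N(q(σ(t₀)))(σ'(t₀)² + ρ'(t₀)²) and C₁ = −N(q(σ(t₀)))ρ'(t₀) with C₁ ≠ 0; set C₂ = C₀/C₁². If σ'(t₁) = 0 at some t₁ ∈ I (a turning point of the oscillating extremal), then C₂·N(q(σ(t₁))) = −1, i.e. N(q(σ(t₁))) = −1/C₂. (Turning points σ', σ'' of oscillating extremals of general type are determined by the equation N = −1/C₂.) -/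

import Mathlib

/-!
Along an extremal the energy `C₀ = -N (σ'² + ρ'²)` and the `ρ`-momentum `C₁ = -N ρ'` are
conserved, because their derivatives vanish identically once the geodesic equations are
substituted. At a turning point `σ' = 0` they read `C₀ = -N ρ'²` and `C₁ = -N ρ'`, so
`C₀ / C₁² = -1 / N` there.
-/

lemma IsOpen.eq_of_hasDerivAt_zero {F : ℝ → ℝ} {I : Set ℝ} (hIopen : IsOpen I)
    (hIconn : IsPreconnected I) (hF : ∀ t ∈ I, HasDerivAt F 0 t)
    {a b : ℝ} (ha : a ∈ I) (hb : b ∈ I) : F a = F b :=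
  hIopen.is_const_of_deriv_eq_zero hIconn
    (fun t ht => (hF t ht).differentiableAt.differentiableWithinAt)
    (fun t ht => (hF t ht).deriv) ha hb

section Extremal

variable (N q σ ρ : ℝ → ℝ)

/-- The first integral `C₀` evaluated at time `t`. -/
noncomputable def energy (t : ℝ) : ℝ :=
  -N (q (σ t)) * (deriv σ t ^ 2 + deriv ρ t ^ 2)

/-- The first integral `C₁` evaluated at time `t`. -/
noncomputable def momentum (t : ℝ) : ℝ :=
  -N (q (σ t)) * deriv ρ t

variable {N q σ ρ} {t : ℝ}

lemma hasDerivAt_conformalFactor (hN : Differentiable ℝ N) (hq : Differentiable ℝ q)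
    (hq' : ∀ s, deriv q s = N (q s)) (hσ : DifferentiableAt ℝ σ t) :
    HasDerivAt (fun t => N (q (σ t))) (deriv N (q (σ t)) * N (q (σ t)) * deriv σ t) t := by
  have hq_at : HasDerivAt q (N (q (σ t))) (σ t) := hq' (σ t) ▸ (hq (σ t)).hasDerivAt
  exact ((hN (q (σ t))).hasDerivAt.comp (σ t) hq_at).comp t hσ.hasDerivAt

lemma hasDerivAt_energy_zero (hN : Differentiable ℝ N) (hq : Differentiable ℝ q)
    (hq' : ∀ s, deriv q s = N (q s)) (hσ : DifferentiableAt ℝ σ t)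
    (hσ'' : DifferentiableAt ℝ (deriv σ) t) (hρ'' : DifferentiableAt ℝ (deriv ρ) t)
    (hext1 : deriv (deriv σ) t
      = (1 / 2) * deriv N (q (σ t)) * ((deriv ρ t) ^ 2 - (deriv σ t) ^ 2))
    (hext2 : deriv (deriv ρ) t = -(deriv N (q (σ t)) * deriv σ t * deriv ρ t)) :
    HasDerivAt (energy N q σ ρ) 0 t := by
  have hsq := (hσ''.hasDerivAt.pow 2).add (hρ''.hasDerivAt.pow 2)
  refine ((hasDerivAt_conformalFactor hN hq hq' hσ).neg.mul hsq).congr_deriv ?_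
  rw [hext1, hext2]
  simp only [Pi.neg_apply, Pi.add_apply, Pi.pow_apply]
  ring

lemma hasDerivAt_momentum_zero (hN : Differentiable ℝ N) (hq : Differentiable ℝ q)
    (hq' : ∀ s, deriv q s = N (q s)) (hσ : DifferentiableAt ℝ σ t)
    (hρ'' : DifferentiableAt ℝ (deriv ρ) t)
    (hext2 : deriv (deriv ρ) t = -(deriv N (q (σ t)) * deriv σ t * deriv ρ t)) :
    HasDerivAt (momentum N q σ ρ) 0 t := by
  refine ((hasDerivAt_conformalFactor hN hq hq' hσ).neg.mul hρ''.hasDerivAt).congr_deriv ?_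
  rw [hext2]
  simp only [Pi.neg_apply]
  ring

lemma energy_div_momentum_sq_mul_of_deriv_eq_zero (hturn : deriv σ t = 0)
    (hC₁ : momentum N q σ ρ t ≠ 0) :
    energy N q σ ρ t / momentum N q σ ρ t ^ 2 * N (q (σ t)) = -1 := by
  unfold energy momentum at *
  have hN : N (q (σ t)) ≠ 0 := fun h => hC₁ (by rw [h]; ring)
  have hρ : deriv ρ t ≠ 0 := fun h => hC₁ (by rw [h]; ring)
  rw [hturn]
  field_simp
  ring

end Extremal

theorem turning_points_of_oscillating_extremals_general
    (N q σ ρ : ℝ → ℝ) (I : Set ℝ) (hIopen : IsOpen I) (hIconn : IsPreconnected I)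
    (hN : Differentiable ℝ N)
    (hq : Differentiable ℝ q) (hq' : ∀ s, deriv q s = N (q s))
    (hσ : ∀ t ∈ I, DifferentiableAt ℝ σ t)
    (hσ'' : ∀ t ∈ I, DifferentiableAt ℝ (deriv σ) t)
    (hρ'' : ∀ t ∈ I, DifferentiableAt ℝ (deriv ρ) t)
    (hext1 : ∀ t ∈ I, deriv (deriv σ) t
      = (1 / 2) * deriv N (q (σ t)) * ((deriv ρ t) ^ 2 - (deriv σ t) ^ 2))
    (hext2 : ∀ t ∈ I, deriv (deriv ρ) t
      = -(deriv N (q (σ t)) * deriv σ t * deriv ρ t))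
    (t₀ : ℝ) (ht₀ : t₀ ∈ I) (C₀ C₁ : ℝ)
    (hC₀ : C₀ = -(N (q (σ t₀))) * ((deriv σ t₀) ^ 2 + (deriv ρ t₀) ^ 2))
    (hC₁ : C₁ = -(N (q (σ t₀))) * deriv ρ t₀)
    (hC₁ne : C₁ ≠ 0)
    (t₁ : ℝ) (ht₁ : t₁ ∈ I) (hturn : deriv σ t₁ = 0) :
    (C₀ / C₁ ^ 2) * N (q (σ t₁)) = -1 ∧
    N (q (σ t₁)) = -1 / (C₀ / C₁ ^ 2) := by
  have hC₀' : C₀ = energy N q σ ρ t₁ :=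
    hC₀.trans <| hIopen.eq_of_hasDerivAt_zero hIconn
      (fun t ht => hasDerivAt_energy_zero hN hq hq' (hσ t ht) (hσ'' t ht) (hρ'' t ht)
        (hext1 t ht) (hext2 t ht)) ht₀ ht₁
  have hC₁' : C₁ = momentum N q σ ρ t₁ :=
    hC₁.trans <| hIopen.eq_of_hasDerivAt_zero hIconn
      (fun t ht => hasDerivAt_momentum_zero hN hq hq' (hσ t ht) (hρ'' t ht) (hext2 t ht))
      ht₀ ht₁
  subst hC₀' hC₁'
  have key := energy_div_momentum_sq_mul_of_deriv_eq_zero hturn hC₁ne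
  have hC₂ne : energy N q σ ρ t₁ / momentum N q σ ρ t₁ ^ 2 ≠ 0 :=
    left_ne_zero_of_mul (by rw [key]; norm_num)
  exact ⟨key, eq_div_of_mul_eq hC₂ne (by rw [mul_comm, key])⟩

/-- Turning points of oscillating extremals of general type: along an extremal
with `N(q(σ)) ≠ 0` on `I` and first integrals `C₀`, `C₁ ≠ 0` (evaluated at a
base point `t₀ ∈ I`), if `σ'(t₁) = 0` at some `t₁ ∈ I`, then with
`C₂ = C₀/C₁²` one has `C₂·N(q(σ(t₁))) = -1`, i.e. `N(q(σ(t₁))) = -1/C₂`. -/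
theorem turning_points_of_oscillating_extremals
    (N q σ ρ : ℝ → ℝ) (I : Set ℝ) (hIopen : IsOpen I) (hIconn : IsPreconnected I)
    (hN : Differentiable ℝ N)
    (hq : Differentiable ℝ q) (hq' : ∀ s, deriv q s = N (q s))
    (hσ : ∀ t ∈ I, DifferentiableAt ℝ σ t)
    (hσ'' : ∀ t ∈ I, DifferentiableAt ℝ (deriv σ) t)
    (hρ : ∀ t ∈ I, DifferentiableAt ℝ ρ t)
    (hρ'' : ∀ t ∈ I, DifferentiableAt ℝ (deriv ρ) t)
    (hext1 : ∀ t ∈ I, deriv (deriv σ) t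
      = (1 / 2) * deriv N (q (σ t)) * ((deriv ρ t) ^ 2 - (deriv σ t) ^ 2))
    (hext2 : ∀ t ∈ I, deriv (deriv ρ) t
      = -(deriv N (q (σ t)) * deriv σ t * deriv ρ t))
    (hNne : ∀ t ∈ I, N (q (σ t)) ≠ 0)
    (t₀ : ℝ) (ht₀ : t₀ ∈ I) (C₀ C₁ : ℝ)
    (hC₀ : C₀ = -(N (q (σ t₀))) * ((deriv σ t₀) ^ 2 + (deriv ρ t₀) ^ 2))
    (hC₁ : C₁ = -(N (q (σ t₀))) * deriv ρ t₀)
    (hC₁ne : C₁ ≠ 0)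
    (t₁ : ℝ) (ht₁ : t₁ ∈ I) (hturn : deriv σ t₁ = 0) :
    (C₀ / C₁ ^ 2) * N (q (σ t₁)) = -1 ∧
    N (q (σ t₁)) = -1 / (C₀ / C₁ ^ 2) :=
  turning_points_of_oscillating_extremals_general N q σ ρ I hIopen hIconn hN hq hq' hσ hσ'' hρ''
    hext1 hext2 t₀ ht₀ C₀ C₁ hC₀ hC₁ hC₁ne t₁ ht₁ hturn
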